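/- σ²_{lin,Φ}(θ^F, β^F) ≤ min{ σ²_lin(θ^L, β^L), σ²_NL, σ²_lin(0,0) }; that is, the estimator with the further-improved adjustment (optimal linear adjustment based on the augmented regressor Φ) is weakly more efficient than the optimally linearly adjusted estimator, the nonlinear (logistic) adjusted estimator, and the unadjusted estimator. -/

import Mathlib

open MeasureTheory ProbabilityTheory Finset

noncomputable section

/-- Population data for a covariate-adaptive randomization (CAR) design:
potential outcomes `Y1, Y0`, potential treatment take-ups `D1, D0` (valued in `{0,1}`),
covariates `X`, stratum `S`, and target assignment probabilities `piS`. -/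
structure CARPop (Ω : Type*) [MeasurableSpace Ω] (𝒮 : Type*) [MeasurableSpace 𝒮]
    (d : ℕ) where
  P : Measure Ω
  Y1 : Ω → ℝ
  Y0 : Ω → ℝ
  D1 : Ω → ℝ
  D0 : Ω → ℝ
  X : Ω → Fin d → ℝ
  S : Ω → 𝒮
  piS : 𝒮 → ℝ

namespace CARPop

variable {Ω : Type*} [MeasurableSpace Ω] {𝒮 : Type*} [MeasurableSpace 𝒮] {d : ℕ}

/-- Potential treatment take-up `D(a)`, with `a : Bool` (`true` = assigned to treatment). -/
def Da (c : CARPop Ω 𝒮 d) (a : Bool) : Ω → ℝ := if a then c.D1 else c.D0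

/-- `Y(D(a)) = Y(1)·D(a) + Y(0)·(1 − D(a))`. -/
def Ya (c : CARPop Ω 𝒮 d) (a : Bool) : Ω → ℝ :=
  fun ω => c.Y1 ω * c.Da a ω + c.Y0 ω * (1 - c.Da a ω)

/-- `W = Y(D(1))`. -/
def W (c : CARPop Ω 𝒮 d) : Ω → ℝ := c.Ya true

/-- `Z = Y(D(0))`. -/
def Z (c : CARPop Ω 𝒮 d) : Ω → ℝ := c.Ya false

/-- The compliers event `{D(1) > D(0)}`. -/
def compliers (c : CARPop Ω 𝒮 d) : Set Ω := {ω | c.D0 ω < c.D1 ω}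

/-- The LATE `τ = E[Y(1) − Y(0) | D(1) > D(0)]`. -/
def tau (c : CARPop Ω 𝒮 d) : ℝ :=
  (∫ ω in c.compliers, (c.Y1 ω - c.Y0 ω) ∂c.P) / (c.P c.compliers).toReal

/-- The stratum event `{S = s}`. -/
def stratum (c : CARPop Ω 𝒮 d) (s : 𝒮) : Set Ω := {ω | c.S ω = s}

/-- Conditional expectation given `S = s`: `E[f | S = s]`. -/
def cEs (c : CARPop Ω 𝒮 d) (s : 𝒮) (f : Ω → ℝ) : ℝ :=
  (∫ ω in c.stratum s, f ω ∂c.P) / (c.P (c.stratum s)).toReal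

/-- Conditional expectation given `S`, i.e. `E[f | S]` as the function `ω ↦ E[f | S = S ω]`. -/
def cES (c : CARPop Ω 𝒮 d) (f : Ω → ℝ) : Ω → ℝ := fun ω => c.cEs (c.S ω) f

/-- Centering at the conditional mean given `S`:  `f − E[f | S]`. -/
def tilt (c : CARPop Ω 𝒮 d) (f : Ω → ℝ) : Ω → ℝ := fun ω => f ω - c.cES f ω

/-- A working model `m(a, s, x)` evaluated along `(S, X)`. -/
def wm (c : CARPop Ω 𝒮 d) (m : Bool → 𝒮 → (Fin d → ℝ) → ℝ) (a : Bool) : Ω → ℝ :=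
  fun ω => m a (c.S ω) (c.X ω)

/-- Square-integrability bound for a working model: `E[(m(a,S,X))² | S = s] ≤ C < ∞`. -/
def WMBound (c : CARPop Ω 𝒮 d) (m : Bool → 𝒮 → (Fin d → ℝ) → ℝ) : Prop :=
  (∀ a : Bool, Measurable (fun ω => m a (c.S ω) (c.X ω))) ∧
    ∃ C : ℝ, ∀ (a : Bool) (s : 𝒮), c.cEs s (fun ω => (m a (c.S ω) (c.X ω)) ^ 2) ≤ C

/-- Influence term `Ξ₁` of the adjusted LATE estimator with working models `mY, mD`. -/
def Xi1 (c : CARPop Ω 𝒮 d) (mY mD : Bool → 𝒮 → (Fin d → ℝ) → ℝ) : Ω → ℝ := fun ω =>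
  ((1 - 1 / c.piS (c.S ω)) * c.tilt (c.wm mY true) ω - c.tilt (c.wm mY false) ω
      + c.tilt c.W ω / c.piS (c.S ω))
    - c.tau * ((1 - 1 / c.piS (c.S ω)) * c.tilt (c.wm mD true) ω
        - c.tilt (c.wm mD false) ω + c.tilt (c.Da true) ω / c.piS (c.S ω))

/-- Influence term `Ξ₀` of the adjusted LATE estimator with working models `mY, mD`. -/
def Xi0 (c : CARPop Ω 𝒮 d) (mY mD : Bool → 𝒮 → (Fin d → ℝ) → ℝ) : Ω → ℝ := fun ω =>
  ((1 / (1 - c.piS (c.S ω)) - 1) * c.tilt (c.wm mY false) ω + c.tilt (c.wm mY true) ω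
      - c.tilt c.Z ω / (1 - c.piS (c.S ω)))
    - c.tau * ((1 / (1 - c.piS (c.S ω)) - 1) * c.tilt (c.wm mD false) ω
        + c.tilt (c.wm mD true) ω - c.tilt (c.Da false) ω / (1 - c.piS (c.S ω)))

/-- Influence term `Ξ₂` (between-strata variation). -/
def Xi2 (c : CARPop Ω 𝒮 d) : Ω → ℝ := fun ω =>
  (c.cES (fun ω' => c.W ω' - c.Z ω') ω - ∫ ω', (c.W ω' - c.Z ω') ∂c.P)
    - c.tau * (c.cES (fun ω' => c.Da true ω' - c.Da false ω') ω
        - ∫ ω', (c.Da true ω' - c.Da false ω') ∂c.P)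

/-- `σ₁² = E[π(S)·Ξ₁²]`. -/
def sigma1Sq (c : CARPop Ω 𝒮 d) (mY mD : Bool → 𝒮 → (Fin d → ℝ) → ℝ) : ℝ :=
  ∫ ω, c.piS (c.S ω) * (c.Xi1 mY mD ω) ^ 2 ∂c.P

/-- `σ₀² = E[(1 − π(S))·Ξ₀²]`. -/
def sigma0Sq (c : CARPop Ω 𝒮 d) (mY mD : Bool → 𝒮 → (Fin d → ℝ) → ℝ) : ℝ :=
  ∫ ω, (1 - c.piS (c.S ω)) * (c.Xi0 mY mD ω) ^ 2 ∂c.P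

/-- `σ₂² = E[Ξ₂²]`. -/
def sigma2Sq (c : CARPop Ω 𝒮 d) : ℝ := ∫ ω, (c.Xi2 ω) ^ 2 ∂c.P

/-- Asymptotic variance `σ² = (σ₁² + σ₀² + σ₂²)/P(D(1) > D(0))²` of the adjusted
LATE estimator with working models `mY, mD`. -/
def sigmaSq (c : CARPop Ω 𝒮 d) (mY mD : Bool → 𝒮 → (Fin d → ℝ) → ℝ) : ℝ :=
  (c.sigma1Sq mY mD + c.sigma0Sq mY mD + c.sigma2Sq) / (c.P c.compliers).toReal ^ 2

/-- The population-level assumptions of the CAR setup (Assumption 1 of the paper). -/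
structure PopAssumptions (c : CARPop Ω 𝒮 d) : Prop where
  prob : IsProbabilityMeasure c.P
  mY1 : Measurable c.Y1
  mY0 : Measurable c.Y0
  mD1 : Measurable c.D1
  mD0 : Measurable c.D0
  mX : Measurable c.X
  mS : Measurable c.S
  d1Bin : ∀ ω, c.D1 ω = 0 ∨ c.D1 ω = 1
  d0Bin : ∀ ω, c.D0 ω = 0 ∨ c.D0 ω = 1
  noDefiers : c.P {ω | c.D1 ω = 0 ∧ c.D0 ω = 1} = 0
  compliersPos : 0 < c.P c.compliers
  strataPos : ∀ s, 0 < c.P (c.stratum s)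
  piRange : ∃ cc : ℝ, 0 < cc ∧ cc < 1 / 2 ∧ ∀ s, cc < c.piS s ∧ c.piS s < 1 - cc
  momentY : ∃ q C : ℝ, 4 ≤ q ∧ ∀ s,
    c.cEs s (fun ω => |c.Y1 ω| ^ q) ≤ C ∧ c.cEs s (fun ω => |c.Y0 ω| ^ q) ≤ C
  intY1sq : Integrable (fun ω => c.Y1 ω ^ 2) c.P
  intY0sq : Integrable (fun ω => c.Y0 ω ^ 2) c.P

section Linear

variable {ι : Type*} [Fintype ι] [DecidableEq ι]

/-- Centered regressor `Ψ̃ₛ = Ψₛ(X) − E[Ψₛ(X) | S = s]`. -/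
def psiTilt (c : CARPop Ω 𝒮 d) (Ψ : 𝒮 → (Fin d → ℝ) → ι → ℝ) (s : 𝒮) : Ω → ι → ℝ :=
  fun ω j => Ψ s (c.X ω) j - c.cEs s (fun ω' => Ψ s (c.X ω') j)

/-- Within-stratum Gram matrix `E[Ψ̃ₛΨ̃ₛᵀ | S = s]`. -/
def gram (c : CARPop Ω 𝒮 d) (Ψ : 𝒮 → (Fin d → ℝ) → ι → ℝ) (s : 𝒮) : Matrix ι ι ℝ :=
  Matrix.of fun i j => c.cEs s (fun ω => c.psiTilt Ψ s ω i * c.psiTilt Ψ s ω j)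

/-- Optimal linear coefficient `θᴸ(a,s) = (E[Ψ̃Ψ̃ᵀ|S=s])⁻¹ E[Ψ̃·Y(D(a)) | S=s]`. -/
def thetaL (c : CARPop Ω 𝒮 d) (Ψ : 𝒮 → (Fin d → ℝ) → ι → ℝ) (a : Bool) (s : 𝒮) : ι → ℝ :=
  Matrix.mulVec (c.gram Ψ s)⁻¹ (fun j => c.cEs s (fun ω => c.psiTilt Ψ s ω j * c.Ya a ω))

/-- Optimal linear coefficient `βᴸ(a,s) = (E[Ψ̃Ψ̃ᵀ|S=s])⁻¹ E[Ψ̃·D(a) | S=s]`. -/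
def betaL (c : CARPop Ω 𝒮 d) (Ψ : 𝒮 → (Fin d → ℝ) → ι → ℝ) (a : Bool) (s : 𝒮) : ι → ℝ :=
  Matrix.mulVec (c.gram Ψ s)⁻¹ (fun j => c.cEs s (fun ω => c.psiTilt Ψ s ω j * c.Da a ω))

/-- Linear working model `x ↦ Ψₛ(x)ᵀ t(a,s)`. -/
def linWM (Ψ : 𝒮 → (Fin d → ℝ) → ι → ℝ) (t : Bool → 𝒮 → ι → ℝ) :
    Bool → 𝒮 → (Fin d → ℝ) → ℝ :=
  fun a s x => ∑ j, Ψ s x j * t a s j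

/-- Asymptotic variance of the LATE estimator with linear adjustments
`μ̄ʸ(a,s,x) = Ψₛ(x)ᵀ t(a,s)` and `μ̄ᴰ(a,s,x) = Ψₛ(x)ᵀ b(a,s)`. -/
def sigmaSqLin (c : CARPop Ω 𝒮 d) (Ψ : 𝒮 → (Fin d → ℝ) → ι → ℝ)
    (t b : Bool → 𝒮 → ι → ℝ) : ℝ :=
  c.sigmaSq (linWM Ψ t) (linWM Ψ b)

/-- Regularity of the regressor `Ψ`: measurability, a conditional moment bound of
order `q > 2`, and eigenvalues of the within-stratum Gram matrices of the centered
regressor bounded away from `0` and `∞`. -/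
def PsiRegular (c : CARPop Ω 𝒮 d) (Ψ : 𝒮 → (Fin d → ℝ) → ι → ℝ) : Prop :=
  (∀ s, Measurable (Ψ s)) ∧
  (∃ q C : ℝ, 2 < q ∧ ∀ s,
      c.cEs s (fun ω => (∑ j, (Ψ (c.S ω) (c.X ω) j) ^ 2) ^ (q / 2)) ≤ C) ∧
  (∃ c' C' : ℝ, 0 < c' ∧ c' ≤ C' ∧ ∀ s, ∀ v : ι → ℝ,
      c' * (∑ j, v j ^ 2) ≤ (∑ j, v j * Matrix.mulVec (c.gram Ψ s) v j) ∧
        (∑ j, v j * Matrix.mulVec (c.gram Ψ s) v j) ≤ C' * (∑ j, v j ^ 2))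

end Linear

end CARPop

namespace CARPop

variable {Ω : Type*} [MeasurableSpace Ω] {𝒮 : Type*} [MeasurableSpace 𝒮] {d k : ℕ}

/-- Logistic CDF `λ(u) = eᵘ/(1 + eᵘ)`. -/
def logistic (u : ℝ) : ℝ := Real.exp u / (1 + Real.exp u)

/-- Regressor with intercept: `Ψ̊ₛ(x) = (1, Ψₛ(x)ᵀ)ᵀ`. -/
def ringPsi (Ψ : 𝒮 → (Fin d → ℝ) → Fin k → ℝ) (s : 𝒮) (x : Fin d → ℝ) :
    Fin (k + 1) → ℝ :=
  Fin.cons 1 (Ψ s x)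

/-- Population logistic log-likelihood given `S = s` and arm `a`, at coefficient `b`. -/
def logLik (c : CARPop Ω 𝒮 d) (Ψ : 𝒮 → (Fin d → ℝ) → Fin k → ℝ) (a : Bool) (s : 𝒮)
    (b : Fin (k + 1) → ℝ) : ℝ :=
  c.cEs s (fun ω =>
    c.Da a ω * Real.log (logistic (∑ j, ringPsi Ψ s (c.X ω) j * b j))
      + (1 - c.Da a ω) * Real.log (1 - logistic (∑ j, ringPsi Ψ s (c.X ω) j * b j)))

/-- Uncentered within-stratum Gram matrix `E[Ψ̊ₛΨ̊ₛᵀ | S = s]`. -/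
def gram0 (c : CARPop Ω 𝒮 d) (Ψ : 𝒮 → (Fin d → ℝ) → Fin k → ℝ) (s : 𝒮) :
    Matrix (Fin (k + 1)) (Fin (k + 1)) ℝ :=
  Matrix.of fun i j =>
    c.cEs s (fun ω => ringPsi Ψ s (c.X ω) i * ringPsi Ψ s (c.X ω) j)

/-- Population OLS coefficient `θᴼᴸˢ(a,s) = (E[Ψ̊Ψ̊ᵀ|S=s])⁻¹ E[Ψ̊·Y(D(a))|S=s]`. -/
def thetaOLS (c : CARPop Ω 𝒮 d) (Ψ : 𝒮 → (Fin d → ℝ) → Fin k → ℝ) (a : Bool) (s : 𝒮) :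
    Fin (k + 1) → ℝ :=
  Matrix.mulVec (c.gram0 Ψ s)⁻¹
    (fun j => c.cEs s (fun ω => ringPsi Ψ s (c.X ω) j * c.Ya a ω))

/-- Augmented regressor `Φₛ(x) = (Ψₛ(x)ᵀ, λ(Ψ̊ₛ(x)ᵀβᴹᴸᴱ₁ₛ), λ(Ψ̊ₛ(x)ᵀβᴹᴸᴱ₀ₛ))ᵀ`. -/
def Phi (Ψ : 𝒮 → (Fin d → ℝ) → Fin k → ℝ) (βMLE : Bool → 𝒮 → Fin (k + 1) → ℝ)
    (s : 𝒮) (x : Fin d → ℝ) : (Fin k ⊕ Bool) → ℝ :=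
  Sum.elim (Ψ s x) (fun a => logistic (∑ j, ringPsi Ψ s x j * βMLE a s j))

end CARPop

/-!
Conditionally on `S`, each competing adjustment is linear in the centered augmented regressor
`Φ̃ = Φ − E[Φ | S]`: the linear one through the `Ψ`-coordinates of `Φ`, the logistic one through
its two fitted-probability coordinates, the OLS one through the `Ψ`-coordinates once centering has
removed its intercept, and no adjustment through zero coefficients. So it suffices to show that
`(θᶠ, βᶠ)` minimises `σ²_{lin,Φ}` over all coefficients.

With `hₐ = Φ̃ᵀ(tₐ − τ bₐ)`, the numerator `σ₁² + σ₀²` is `E[π ξ₁(h)² + (1 − π) ξ₀(h)²]`, a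
quadratic in `h`. Expanding it around the optimum `h*`, the cross term only involves the residuals
`W̃ − τ D̃(1) − h*₁` and `Z̃ − τ D̃(0) − h*₀`, and the within-stratum normal equations defining
`θᴸ` and `βᴸ` make them orthogonal to every `S`-weighted combination of coordinates of `Φ̃`. What
is left is a weighted square, which is nonnegative.
-/

section Fibers

variable {α 𝒮 : Type*} [MeasurableSpace α] [MeasurableSpace 𝒮] [MeasurableSingletonClass 𝒮]
  {μ : Measure α} {S : α → 𝒮}

theorem MeasureTheory.MemLp.integrable_fun_mul {f g : α → ℝ} (hf : MemLp f 2 μ)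
    (hg : MemLp g 2 μ) : Integrable (fun x => f x * g x) μ :=
  hf.integrable_mul hg

theorem integral_dotProduct {ι : Type*} [Fintype ι] {F : α → ι → ℝ}
    (hF : ∀ j, Integrable (fun x => F x j) μ) (v : ι → ℝ) :
    ∫ x, F x ⬝ᵥ v ∂μ = (fun j => ∫ x, F x j ∂μ) ⬝ᵥ v := by
  simp only [dotProduct]
  rw [integral_finsetSum _ fun j _ => (hF j).mul_const _]
  simp only [integral_mul_const]

theorem memLp_top_comp [Finite 𝒮] (hS : Measurable S) (g : 𝒮 → ℝ) :
    MemLp (fun x => g (S x)) ⊤ μ := by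
  obtain ⟨C, hC⟩ := Finite.bddAbove_range fun s => ‖g s‖
  exact memLp_top_of_bound ((measurable_of_finite g).comp hS).aestronglyMeasurable C
    (.of_forall fun x => hC ⟨S x, rfl⟩)

theorem MeasureTheory.MemLp.comp_mul [Finite 𝒮] {p : ENNReal} {f : α → ℝ} (hf : MemLp f p μ)
    (hS : Measurable S) (g : 𝒮 → ℝ) : MemLp (fun x => g (S x) * f x) p μ :=
  hf.mul' (memLp_top_comp hS g)

theorem integrable_comp_mul_sq [Finite 𝒮] {f : α → ℝ} (hf : MemLp f 2 μ) (hS : Measurable S)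
    (g : 𝒮 → ℝ) : Integrable (fun x => g (S x) * f x ^ 2) μ := by
  simpa only [sq, Pi.mul_def, mul_assoc] using (hf.comp_mul hS g).integrable_mul hf

theorem memLp_of_memLp_restrict_fiber [Fintype 𝒮] {p : ENNReal} {F : 𝒮 → α → ℝ}
    (hS : Measurable S) (hF : ∀ s, MemLp (F s) p (μ.restrict (S ⁻¹' {s}))) :
    MemLp (fun x => F (S x) x) p μ := by
  have hsum : (fun x => F (S x) x) = ∑ s, (S ⁻¹' {s}).indicator (F s) := by
    ext x
    rw [Finset.sum_apply, Finset.sum_eq_single (S x) (fun s _ hs => ?_) (by simp)]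
    · simp
    · exact Set.indicator_of_notMem (fun h => hs h.symm) _
  rw [hsum]
  exact memLp_finsetSum' _ fun s _ =>
    (memLp_indicator_iff_restrict (hS (measurableSet_singleton s))).2 (hF s)

theorem integral_eq_sum_setIntegral_fiber [Fintype 𝒮] (hS : Measurable S) {f : α → ℝ}
    (hf : Integrable f μ) : ∫ x, f x ∂μ = ∑ s, ∫ x in S ⁻¹' {s}, f x ∂μ := by
  rw [← integral_iUnion_fintype (fun s => hS (measurableSet_singleton s))
    (fun s t hst => Set.disjoint_singleton.2 hst |>.preimage S) fun s => hf.integrableOn]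
  rw [← Set.preimage_iUnion, Set.iUnion_of_singleton, Set.preimage_univ, setIntegral_univ]

end Fibers

namespace CARPop

/-- `Ξ₁` and `Ξ₀` as functions of `p = π(S)`, of the combined adjustments
`hₐ = μ̃ʸ(a) − τ μ̃ᴰ(a)`, and of `f = W̃ − τ D̃(1)`, resp. `f = Z̃ − τ D̃(0)`
(see `Xi1_eq_xiOne`, `Xi0_eq_xiZero`). -/
def xiOne (p h₁ h₀ f : ℝ) : ℝ := (1 - p⁻¹) * h₁ - h₀ + p⁻¹ * f

def xiZero (p h₁ h₀ f : ℝ) : ℝ := ((1 - p)⁻¹ - 1) * h₀ + h₁ - (1 - p)⁻¹ * f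

def xiSq (p h₁ h₀ f₁ f₀ : ℝ) : ℝ := p * xiOne p h₁ h₀ f₁ ^ 2 + (1 - p) * xiZero p h₁ h₀ f₀ ^ 2

theorem xiSq_nonneg {p : ℝ} (hp₀ : 0 ≤ p) (hp₁ : p ≤ 1) (h₁ h₀ f₁ f₀ : ℝ) :
    0 ≤ xiSq p h₁ h₀ f₁ f₀ :=
  add_nonneg (mul_nonneg hp₀ (sq_nonneg _)) (mul_nonneg (sub_nonneg.2 hp₁) (sq_nonneg _))

/-- The cross term involves `h` only through the residuals `f - h`, because
`p * xiOne p e₁ e₀ 0 + (1 - p) * xiZero p e₁ e₀ 0 = 0`. -/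
theorem xiSq_eq_add {p : ℝ} (hp₀ : p ≠ 0) (hp₁ : 1 - p ≠ 0) (h₁ h₀ u₁ u₀ f₁ f₀ : ℝ) :
    xiSq p u₁ u₀ f₁ f₀ = xiSq p h₁ h₀ f₁ f₀
      + 2 * ((f₁ - h₁) * ((1 - p⁻¹) * (u₁ - h₁) + -1 * (u₀ - h₀))
        - (f₀ - h₀) * (1 * (u₁ - h₁) + ((1 - p)⁻¹ - 1) * (u₀ - h₀)))
      + xiSq p (u₁ - h₁) (u₀ - h₀) 0 0 := by
  unfold xiSq xiOne xiZero
  field_simp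
  ring

section Weighted

variable {α 𝒮 : Type*} [MeasurableSpace α] [MeasurableSpace 𝒮] [MeasurableSingletonClass 𝒮]
  [Finite 𝒮] {μ : Measure α} {S : α → 𝒮}

theorem memLp_xiOne (hS : Measurable S) (π : 𝒮 → ℝ) {h₁ h₀ f : α → ℝ} (hh₁ : MemLp h₁ 2 μ)
    (hh₀ : MemLp h₀ 2 μ) (hf : MemLp f 2 μ) :
    MemLp (fun x => xiOne (π (S x)) (h₁ x) (h₀ x) (f x)) 2 μ :=
  ((hh₁.comp_mul hS fun s => 1 - (π s)⁻¹).sub hh₀).add (hf.comp_mul hS fun s => (π s)⁻¹)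

theorem memLp_xiZero (hS : Measurable S) (π : 𝒮 → ℝ) {h₁ h₀ f : α → ℝ} (hh₁ : MemLp h₁ 2 μ)
    (hh₀ : MemLp h₀ 2 μ) (hf : MemLp f 2 μ) :
    MemLp (fun x => xiZero (π (S x)) (h₁ x) (h₀ x) (f x)) 2 μ :=
  ((hh₀.comp_mul hS fun s => (1 - π s)⁻¹ - 1).add hh₁).sub (hf.comp_mul hS fun s => (1 - π s)⁻¹)

section

variable (hS : Measurable S) (π : 𝒮 → ℝ) {h₁ h₀ f₁ f₀ : α → ℝ} (hh₁ : MemLp h₁ 2 μ)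
  (hh₀ : MemLp h₀ 2 μ) (hf₁ : MemLp f₁ 2 μ) (hf₀ : MemLp f₀ 2 μ)
include hS hh₁ hh₀ hf₁ hf₀

theorem integrable_xiSq : Integrable (fun x => xiSq (π (S x)) (h₁ x) (h₀ x) (f₁ x) (f₀ x)) μ :=
  (integrable_comp_mul_sq (memLp_xiOne hS π hh₁ hh₀ hf₁) hS π).add
    (integrable_comp_mul_sq (memLp_xiZero hS π hh₁ hh₀ hf₀) hS fun s => 1 - π s)

theorem integral_xiSq :
    ∫ x, xiSq (π (S x)) (h₁ x) (h₀ x) (f₁ x) (f₀ x) ∂μ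
      = (∫ x, π (S x) * xiOne (π (S x)) (h₁ x) (h₀ x) (f₁ x) ^ 2 ∂μ)
        + ∫ x, (1 - π (S x)) * xiZero (π (S x)) (h₁ x) (h₀ x) (f₀ x) ^ 2 ∂μ :=
  integral_add (integrable_comp_mul_sq (memLp_xiOne hS π hh₁ hh₀ hf₁) hS π)
    (integrable_comp_mul_sq (memLp_xiZero hS π hh₁ hh₀ hf₀) hS fun s => 1 - π s)

end

theorem integral_xiSq_le_of_orthogonal (hS : Measurable S) {π : 𝒮 → ℝ}
    (hπ : ∀ s, 0 < π s ∧ π s < 1) {h u f : Bool → α → ℝ} (hh : ∀ a, MemLp (h a) 2 μ)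
    (hu : ∀ a, MemLp (u a) 2 μ) (hf : ∀ a, MemLp (f a) 2 μ)
    (horth : ∀ a (g₁ g₀ : 𝒮 → ℝ), ∫ x, (f a x - h a x)
      * (g₁ (S x) * (u true x - h true x) + g₀ (S x) * (u false x - h false x)) ∂μ = 0) :
    ∫ x, xiSq (π (S x)) (h true x) (h false x) (f true x) (f false x) ∂μ
      ≤ ∫ x, xiSq (π (S x)) (u true x) (u false x) (f true x) (f false x) ∂μ := by
  have he (a : Bool) : MemLp (fun x => u a x - h a x) 2 μ := (hu a).sub (hh a)
  have hcross (a : Bool) (g₁ g₀ : 𝒮 → ℝ) : Integrable (fun x => (f a x - h a x)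
      * (g₁ (S x) * (u true x - h true x) + g₀ (S x) * (u false x - h false x))) μ :=
    ((hf a).sub (hh a)).integrable_fun_mul
      (((he true).comp_mul hS g₁).add ((he false).comp_mul hS g₀))
  have horth₁ := horth true (fun s => 1 - (π s)⁻¹) fun _ => -1
  have horth₀ := horth false (fun _ => 1) fun s => (1 - π s)⁻¹ - 1
  have hcross₁ := hcross true (fun s => 1 - (π s)⁻¹) fun _ => -1
  have hcross₀ := hcross false (fun _ => 1) fun s => (1 - π s)⁻¹ - 1
  beta_reduce at horth₁ horth₀ hcross₁ hcross₀
  have hbase := integrable_xiSq hS π (hh true) (hh false) (hf true) (hf false)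
  have hsq := integrable_xiSq hS π (he true) (he false) MemLp.zero' MemLp.zero'
  have hsq_nonneg : 0 ≤ ∫ x, xiSq (π (S x)) (u true x - h true x) (u false x - h false x) 0 0 ∂μ :=
    integral_nonneg fun x => xiSq_nonneg (hπ (S x)).1.le (hπ (S x)).2.le _ _ _ _
  calc _ ≤ ∫ x, xiSq (π (S x)) (h true x) (h false x) (f true x) (f false x) ∂μ
        + 2 * (∫ x, (f true x - h true x) * ((1 - (π (S x))⁻¹) * (u true x - h true x)
              + -1 * (u false x - h false x)) ∂μ
            - ∫ x, (f false x - h false x) * (1 * (u true x - h true x)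
              + ((1 - π (S x))⁻¹ - 1) * (u false x - h false x)) ∂μ)
        + ∫ x, xiSq (π (S x)) (u true x - h true x) (u false x - h false x) 0 0 ∂μ := by
        rw [horth₁, horth₀]
        linarith
    _ = _ := by
        rw [← integral_sub hcross₁ hcross₀, ← integral_const_mul,
          ← integral_add hbase ((hcross₁.sub' hcross₀).const_mul 2),
          ← integral_add (hbase.fun_add ((hcross₁.sub' hcross₀).const_mul 2)) hsq]
        exact integral_congr_ae (ae_of_all _ fun x =>
          (xiSq_eq_add (hπ _).1.ne' (sub_ne_zero.2 (hπ _).2.ne') _ _ _ _ _ _).symm)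

end Weighted

section Augmented

variable {𝒮 : Type*} {d k : ℕ}

theorem linWM_Phi_inl (Ψ : 𝒮 → (Fin d → ℝ) → Fin k → ℝ) (β : Bool → 𝒮 → Fin (k + 1) → ℝ)
    (t : Bool → 𝒮 → Fin k → ℝ) :
    linWM (Phi Ψ β) (fun a s => Sum.elim (t a s) 0) = linWM Ψ t := by
  funext a s x
  simp [linWM, Phi, Fintype.sum_sum_type]

theorem linWM_Phi_inr (Ψ : 𝒮 → (Fin d → ℝ) → Fin k → ℝ) (β : Bool → 𝒮 → Fin (k + 1) → ℝ) :
    linWM (Phi Ψ β) (fun a _ => Pi.single (Sum.inr a) 1)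
      = fun a s x => logistic (∑ j, ringPsi Ψ s x j * β a s j) := by
  funext a s x
  exact (dotProduct_single _ _ _).trans (mul_one _)

end Augmented

variable {Ω : Type*} [MeasurableSpace Ω] {𝒮 : Type*} [MeasurableSpace 𝒮] {d : ℕ}
  {c : CARPop Ω 𝒮 d}

section Strata

theorem setIntegral_stratum_eq_cEs_mul [IsFiniteMeasure c.P] (s : 𝒮) (f : Ω → ℝ) :
    ∫ ω in c.stratum s, f ω ∂c.P = c.cEs s f * (c.P (c.stratum s)).toReal := by
  rcases eq_or_ne (c.P (c.stratum s)).toReal 0 with h | h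
  · have hnull : c.P (c.stratum s) = 0 := by simpa [ENNReal.toReal_eq_zero_iff] using h
    rw [h, mul_zero, Measure.restrict_eq_zero.2 hnull, integral_zero_measure]
  · exact (div_mul_cancel₀ _ h).symm

theorem setIntegral_sub_cEs [IsFiniteMeasure c.P] (s : 𝒮) (f : Ω → ℝ) :
    ∫ ω in c.stratum s, (f ω - c.cEs s f) ∂c.P = 0 := by
  by_cases hf : IntegrableOn f (c.stratum s) c.P
  · rw [integral_sub hf (integrable_const _), setIntegral_const, setIntegral_stratum_eq_cEs_mul,
      measureReal_def, smul_eq_mul, mul_comm, sub_self]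
  · exact integral_undef fun h => hf <| (h.add (integrable_const (c.cEs s f))).congr
      (ae_of_all _ fun ω => sub_add_cancel (f ω) _)

theorem cEs_const_add [IsFiniteMeasure c.P] {s : 𝒮} (hs : c.P (c.stratum s) ≠ 0) (r : ℝ)
    {f : Ω → ℝ} (hf : IntegrableOn f (c.stratum s) c.P) :
    c.cEs s (fun ω => r + f ω) = r + c.cEs s f := by
  have hs' : (c.P (c.stratum s)).toReal ≠ 0 := ENNReal.toReal_ne_zero.2 ⟨hs, measure_ne_top _ _⟩
  rw [cEs, integral_add (integrable_const r) hf, setIntegral_const, measureReal_def, smul_eq_mul,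
    add_div, mul_div_cancel_left₀ _ hs', cEs]

theorem cEs_dotProduct {ι : Type*} [Fintype ι] {s : 𝒮} {F : Ω → ι → ℝ}
    (hF : ∀ j, IntegrableOn (fun ω => F ω j) (c.stratum s) c.P) (v : ι → ℝ) :
    c.cEs s (fun ω => F ω ⬝ᵥ v) = (fun j => c.cEs s (fun ω => F ω j)) ⬝ᵥ v := by
  rw [cEs, integral_dotProduct hF]
  simp only [cEs, dotProduct, Finset.sum_div, div_mul_eq_mul_div]

variable [MeasurableSingletonClass 𝒮]

theorem measurableSet_stratum (hS : Measurable c.S) (s : 𝒮) : MeasurableSet (c.stratum s) :=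
  hS (measurableSet_singleton s)

theorem cEs_comp_S (hS : Measurable c.S) (F : 𝒮 → Ω → ℝ) (s : 𝒮) :
    c.cEs s (fun ω => F (c.S ω) ω) = c.cEs s (F s) := by
  unfold cEs
  rw [setIntegral_congr_fun (measurableSet_stratum hS s) fun ω (hω : c.S ω = s) => by rw [hω]]

theorem tilt_comp_S (hS : Measurable c.S) (F : 𝒮 → Ω → ℝ) (ω : Ω) :
    c.tilt (fun ω => F (c.S ω) ω) ω = F (c.S ω) ω - c.cEs (c.S ω) (F (c.S ω)) := by
  rw [tilt, cES, cEs_comp_S hS]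

theorem tilt_comp_S_add [IsFiniteMeasure c.P] (hS : Measurable c.S)
    (hpos : ∀ s, c.P (c.stratum s) ≠ 0) (g : 𝒮 → ℝ) {f : Ω → ℝ}
    (hf : ∀ s, IntegrableOn f (c.stratum s) c.P) :
    c.tilt (fun ω => g (c.S ω) + f ω) = c.tilt f := by
  funext ω
  rw [tilt_comp_S hS (fun s ω => g s + f ω), cEs_const_add (hpos _) _ (hf _), tilt, cES]
  ring

theorem memLp_tilt [Finite 𝒮] [IsFiniteMeasure c.P] (hS : Measurable c.S) {f : Ω → ℝ}
    (hf : MemLp f 2 c.P) : MemLp (c.tilt f) 2 c.P :=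
  hf.sub ((memLp_top_comp hS fun s => c.cEs s f).mono_exponent le_top)

end Strata

section Regressors

open Matrix

variable {ι : Type*} [Fintype ι] {Φ : 𝒮 → (Fin d → ℝ) → ι → ℝ}

def linPred (c : CARPop Ω 𝒮 d) (Φ : 𝒮 → (Fin d → ℝ) → ι → ℝ) (δ : 𝒮 → ι → ℝ) : Ω → ℝ :=
  fun ω => c.psiTilt Φ (c.S ω) ω ⬝ᵥ δ (c.S ω)

theorem tilt_wm_linWM [MeasurableSingletonClass 𝒮] (hS : Measurable c.S)
    (hΦ : ∀ s j, IntegrableOn (fun ω => Φ s (c.X ω) j) (c.stratum s) c.P)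
    (t : Bool → 𝒮 → ι → ℝ) (a : Bool) :
    c.tilt (c.wm (linWM Φ t) a) = c.linPred Φ (t a) := by
  funext ω
  refine (tilt_comp_S hS (fun s ω => Φ s (c.X ω) ⬝ᵥ t a s) ω).trans ?_
  rw [cEs_dotProduct (hΦ _), ← sub_dotProduct]
  rfl

theorem integrableOn_wm_linWM [MeasurableSingletonClass 𝒮] (hS : Measurable c.S)
    (hΦ : ∀ s j, IntegrableOn (fun ω => Φ s (c.X ω) j) (c.stratum s) c.P)
    (t : Bool → 𝒮 → ι → ℝ) (a : Bool) (s : 𝒮) :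
    IntegrableOn (c.wm (linWM Φ t) a) (c.stratum s) c.P :=
  IntegrableOn.congr_fun (integrable_finsetSum Finset.univ fun j _ => (hΦ s j).mul_const (t a s j))
    (fun ω (hω : c.S ω = s) => by simp only [wm, linWM, hω]) (measurableSet_stratum hS s)

theorem PsiRegular.gram_diag_pos (hΦ : c.PsiRegular Φ) (s : 𝒮) (j : ι) :
    0 < c.gram Φ s j j := by
  classical
  obtain ⟨-, -, κ, _, hκ, -, heig⟩ := hΦ
  exact hκ.trans_le <| by
    simpa [Pi.single_apply, mulVec, dotProduct] using (heig s (Pi.single j 1)).1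

theorem PsiRegular.isUnit_gram_det [DecidableEq ι] (hΦ : c.PsiRegular Φ) (s : 𝒮) :
    IsUnit (c.gram Φ s).det := by
  obtain ⟨-, -, κ, _, hκ, -, heig⟩ := hΦ
  refine isUnit_iff_ne_zero.2 fun hdet => ?_
  obtain ⟨v, hv, hGv⟩ := Matrix.exists_mulVec_eq_zero_iff.2 hdet
  have hpos : 0 < ∑ j, v j ^ 2 := by
    obtain ⟨j, hj⟩ := Function.ne_iff.1 hv
    exact Finset.sum_pos' (fun i _ => sq_nonneg _)
      ⟨j, Finset.mem_univ j, (sq_nonneg _).lt_of_ne (pow_ne_zero 2 hj).symm⟩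
  have := (heig s v).1
  simp only [hGv, Pi.zero_apply, mul_zero, Finset.sum_const_zero] at this
  nlinarith

theorem gram_mulVec_thetaL [DecidableEq ι] (hΦ : c.PsiRegular Φ) (a : Bool) (s : 𝒮) :
    c.gram Φ s *ᵥ c.thetaL Φ a s
      = fun j => c.cEs s (fun ω => c.psiTilt Φ s ω j * c.Ya a ω) := by
  rw [thetaL, mulVec_mulVec, Matrix.mul_nonsing_inv _ (hΦ.isUnit_gram_det s), one_mulVec]

theorem gram_mulVec_betaL [DecidableEq ι] (hΦ : c.PsiRegular Φ) (a : Bool) (s : 𝒮) :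
    c.gram Φ s *ᵥ c.betaL Φ a s
      = fun j => c.cEs s (fun ω => c.psiTilt Φ s ω j * c.Da a ω) := by
  rw [betaL, mulVec_mulVec, Matrix.mul_nonsing_inv _ (hΦ.isUnit_gram_det s), one_mulVec]

/-- If `Φ̃ⱼ²` were not integrable on the stratum, its integral, hence the diagonal Gram entry,
would be the junk value `0`, against the eigenvalue bound. -/
theorem PsiRegular.memLp_psiTilt (hΦ : c.PsiRegular Φ) (hX : Measurable c.X) (s : 𝒮) (j : ι) :
    MemLp (fun ω => c.psiTilt Φ s ω j) 2 (c.P.restrict (c.stratum s)) := by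
  have hne : ∫ ω in c.stratum s, c.psiTilt Φ s ω j * c.psiTilt Φ s ω j ∂c.P ≠ 0 := fun h =>
    (hΦ.gram_diag_pos s j).ne' (by simp [gram, cEs, h])
  refine (memLp_two_iff_integrable_sq ?_).2 ?_
  · exact (((measurable_pi_apply j).comp ((hΦ.1 s).comp hX)).sub
      measurable_const).aestronglyMeasurable
  · simpa only [sq] using Integrable.of_integral_ne_zero hne

theorem PsiRegular.integrableOn_coord [IsFiniteMeasure c.P] (hΦ : c.PsiRegular Φ)
    (hX : Measurable c.X) (s : 𝒮) (j : ι) :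
    IntegrableOn (fun ω => Φ s (c.X ω) j) (c.stratum s) c.P :=
  (((hΦ.memLp_psiTilt hX s j).integrable one_le_two).add (integrable_const
    (c.cEs s fun ω => Φ s (c.X ω) j))).congr (ae_of_all _ fun _ => sub_add_cancel _ _)

theorem PsiRegular.memLp_linPred [Fintype 𝒮] [MeasurableSingletonClass 𝒮]
    (hΦ : c.PsiRegular Φ) (hS : Measurable c.S) (hX : Measurable c.X) (δ : 𝒮 → ι → ℝ) :
    MemLp (c.linPred Φ δ) 2 c.P := by
  have hψ (j : ι) : MemLp (fun ω => c.psiTilt Φ (c.S ω) ω j) 2 c.P :=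
    memLp_of_memLp_restrict_fiber hS fun s => hΦ.memLp_psiTilt hX s j
  exact memLp_finsetSum _ fun j _ => (memLp_top_comp hS fun s => δ s j).mul (hψ j)

theorem tilt_wm_linWM_ringPsi [MeasurableSingletonClass 𝒮] [IsFiniteMeasure c.P] {k : ℕ}
    {Ψ : 𝒮 → (Fin d → ℝ) → Fin k → ℝ} (hS : Measurable c.S)
    (hpos : ∀ s, c.P (c.stratum s) ≠ 0)
    (hΨ : ∀ s j, IntegrableOn (fun ω => Ψ s (c.X ω) j) (c.stratum s) c.P)
    (θ : Bool → 𝒮 → Fin (k + 1) → ℝ) (a : Bool) :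
    c.tilt (c.wm (linWM (ringPsi Ψ) θ) a)
      = c.tilt (c.wm (linWM Ψ fun a s => Fin.tail (θ a s)) a) := by
  have hsplit : c.wm (linWM (ringPsi Ψ) θ) a
      = fun ω => θ a (c.S ω) 0 + c.wm (linWM Ψ fun a s => Fin.tail (θ a s)) a ω := by
    funext ω
    simp [wm, linWM, ringPsi, Fin.sum_univ_succ, Fin.tail]
  rw [hsplit, tilt_comp_S_add hS hpos (fun s => θ a s 0) (integrableOn_wm_linWM hS hΨ _ a)]

end Regressors

section NormalEquations

open Matrix

variable {ι : Type*} [Fintype ι] {Φ : 𝒮 → (Fin d → ℝ) → ι → ℝ} [IsFiniteMeasure c.P]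

section Stratum

variable {s : 𝒮} (hψ : ∀ i, MemLp (fun ω => c.psiTilt Φ s ω i) 2 (c.P.restrict (c.stratum s)))
  {f : Ω → ℝ} (hf : MemLp f 2 (c.P.restrict (c.stratum s))) {θ : ι → ℝ}
  (hθ : c.gram Φ s *ᵥ θ = fun j => c.cEs s (fun ω => c.psiTilt Φ s ω j * f ω))
include hψ hf hθ

theorem setIntegral_psiTilt_mul_residual (j : ι) :
    ∫ ω in c.stratum s, c.psiTilt Φ s ω j * (f ω - c.cEs s f - c.psiTilt Φ s ω ⬝ᵥ θ) ∂c.P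
      = 0 := by
  have hψj := (hψ j).integrable one_le_two
  have hψψ (i : ι) := (hψ j).integrable_fun_mul (hψ i)
  have hψf := (hψ j).integrable_fun_mul hf
  have hψθ : Integrable (fun ω => (fun i => c.psiTilt Φ s ω j * c.psiTilt Φ s ω i) ⬝ᵥ θ)
      (c.P.restrict (c.stratum s)) := by
    simpa only [dotProduct] using integrable_finsetSum _ fun i _ => (hψψ i).mul_const (θ i)
  have hcentered : ∫ ω in c.stratum s, c.psiTilt Φ s ω j ∂c.P = 0 :=
    setIntegral_sub_cEs s fun ω => Φ s (c.X ω) j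
  have hgram : (fun i => ∫ ω in c.stratum s, c.psiTilt Φ s ω j * c.psiTilt Φ s ω i ∂c.P)
      = (c.P (c.stratum s)).toReal • fun i => c.gram Φ s j i := by
    ext i
    rw [setIntegral_stratum_eq_cEs_mul, mul_comm]
    rfl
  have hψfm : Integrable (fun ω => c.psiTilt Φ s ω j * f ω - c.cEs s f * c.psiTilt Φ s ω j)
      (c.P.restrict (c.stratum s)) := hψf.sub (hψj.const_mul _)
  calc _ = ∫ ω in c.stratum s, (c.psiTilt Φ s ω j * f ω - c.cEs s f * c.psiTilt Φ s ω j) ∂c.P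
        - ∫ ω in c.stratum s, (fun i => c.psiTilt Φ s ω j * c.psiTilt Φ s ω i) ⬝ᵥ θ ∂c.P := by
        rw [← integral_sub hψfm hψθ]
        congr 1 with ω
        rw [show (fun i => c.psiTilt Φ s ω j * c.psiTilt Φ s ω i)
          = c.psiTilt Φ s ω j • c.psiTilt Φ s ω from rfl, smul_dotProduct, smul_eq_mul]
        ring
    _ = 0 := by
        rw [integral_sub hψf (hψj.const_mul _), integral_const_mul, hcentered,
          integral_dotProduct hψψ, hgram, smul_dotProduct, setIntegral_stratum_eq_cEs_mul]
        have hnormal := congrFun hθ j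
        simp only [mulVec] at hnormal
        rw [hnormal, smul_eq_mul]
        ring

theorem setIntegral_dotProduct_mul_residual (v : ι → ℝ) :
    ∫ ω in c.stratum s, (c.psiTilt Φ s ω ⬝ᵥ v) * (f ω - c.cEs s f - c.psiTilt Φ s ω ⬝ᵥ θ) ∂c.P
      = 0 := by
  have hres : MemLp (fun ω => f ω - c.cEs s f - c.psiTilt Φ s ω ⬝ᵥ θ) 2
      (c.P.restrict (c.stratum s)) :=
    (hf.sub (memLp_const _)).sub (memLp_finsetSum _ fun i _ => (hψ i).mul_const (θ i))
  calc _ = ∫ ω in c.stratum s, (fun j => c.psiTilt Φ s ω j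
          * (f ω - c.cEs s f - c.psiTilt Φ s ω ⬝ᵥ θ)) ⬝ᵥ v ∂c.P := by
        congr 1 with ω
        simp only [dotProduct, Finset.sum_mul]
        exact Finset.sum_congr rfl fun j _ => by ring
    _ = 0 := by
        rw [integral_dotProduct fun j => (hψ j).integrable_fun_mul hres]
        simp [setIntegral_psiTilt_mul_residual hψ hf hθ]

end Stratum

theorem integral_residual_mul_linPred [Fintype 𝒮] [MeasurableSingletonClass 𝒮]
    (hΦ : c.PsiRegular Φ) (hS : Measurable c.S) (hX : Measurable c.X) {f : Ω → ℝ}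
    (hf : MemLp f 2 c.P) {θ : 𝒮 → ι → ℝ}
    (hθ : ∀ s, c.gram Φ s *ᵥ θ s = fun j => c.cEs s (fun ω => c.psiTilt Φ s ω j * f ω))
    (δ : 𝒮 → ι → ℝ) :
    ∫ ω, (c.tilt f ω - c.linPred Φ θ ω) * c.linPred Φ δ ω ∂c.P = 0 := by
  have hint : Integrable (fun ω => (c.tilt f ω - c.linPred Φ θ ω) * c.linPred Φ δ ω) c.P :=
    ((memLp_tilt hS hf).sub (hΦ.memLp_linPred hS hX θ)).integrable_fun_mul
      (hΦ.memLp_linPred hS hX δ)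
  rw [integral_eq_sum_setIntegral_fiber hS hint]
  refine Finset.sum_eq_zero fun s _ => ?_
  rw [← setIntegral_dotProduct_mul_residual (hΦ.memLp_psiTilt hX s) (hf.restrict _) (hθ s) (δ s)]
  refine setIntegral_congr_fun (measurableSet_stratum hS s) ?_
  rintro ω (rfl : c.S ω = s)
  simp only [tilt, cES, linPred]
  ring

end NormalEquations

section Variance

theorem PopAssumptions.memLp_top_Da (hc : c.PopAssumptions) (a : Bool) :
    MemLp (c.Da a) ⊤ c.P := by
  have hbin (ω : Ω) : c.Da a ω = 0 ∨ c.Da a ω = 1 := by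
    cases a
    exacts [hc.d0Bin ω, hc.d1Bin ω]
  refine memLp_top_of_bound ?_ 1 (.of_forall fun ω => by rcases hbin ω with h | h <;> simp [h])
  cases a
  exacts [hc.mD0.aestronglyMeasurable, hc.mD1.aestronglyMeasurable]

theorem PopAssumptions.memLp_Da (hc : c.PopAssumptions) (a : Bool) : MemLp (c.Da a) 2 c.P :=
  have := hc.prob
  (hc.memLp_top_Da a).mono_exponent le_top

theorem PopAssumptions.memLp_Ya (hc : c.PopAssumptions) (a : Bool) : MemLp (c.Ya a) 2 c.P := by
  have hY1 := (memLp_two_iff_integrable_sq hc.mY1.aestronglyMeasurable).2 hc.intY1sq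
  have hY0 := (memLp_two_iff_integrable_sq hc.mY0.aestronglyMeasurable).2 hc.intY0sq
  exact ((hc.memLp_top_Da a).mul hY1).add (((memLp_top_const 1).sub (hc.memLp_top_Da a)).mul hY0)

/-- `W̃ − τ D̃(1)` for `a = true` and `Z̃ − τ D̃(0)` for `a = false`. -/
def tiltResponse (c : CARPop Ω 𝒮 d) (a : Bool) : Ω → ℝ :=
  fun ω => c.tilt (c.Ya a) ω - c.tau * c.tilt (c.Da a) ω

theorem Xi1_eq_xiOne (mY mD : Bool → 𝒮 → (Fin d → ℝ) → ℝ) (ω : Ω) :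
    c.Xi1 mY mD ω = xiOne (c.piS (c.S ω))
      (c.tilt (c.wm mY true) ω - c.tau * c.tilt (c.wm mD true) ω)
      (c.tilt (c.wm mY false) ω - c.tau * c.tilt (c.wm mD false) ω)
      (c.tiltResponse true ω) := by
  simp only [Xi1, xiOne, W, tiltResponse]
  ring

theorem Xi0_eq_xiZero (mY mD : Bool → 𝒮 → (Fin d → ℝ) → ℝ) (ω : Ω) :
    c.Xi0 mY mD ω = xiZero (c.piS (c.S ω))
      (c.tilt (c.wm mY true) ω - c.tau * c.tilt (c.wm mD true) ω)
      (c.tilt (c.wm mY false) ω - c.tau * c.tilt (c.wm mD false) ω)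
      (c.tiltResponse false ω) := by
  simp only [Xi0, xiZero, Z, tiltResponse]
  ring

theorem sigmaSq_congr_tilt {mY mD mY' mD' : Bool → 𝒮 → (Fin d → ℝ) → ℝ}
    (hY : ∀ a, c.tilt (c.wm mY a) = c.tilt (c.wm mY' a))
    (hD : ∀ a, c.tilt (c.wm mD a) = c.tilt (c.wm mD' a)) :
    c.sigmaSq mY mD = c.sigmaSq mY' mD' := by
  simp only [sigmaSq, sigma1Sq, sigma0Sq, Xi1_eq_xiOne, Xi0_eq_xiZero, hY, hD]

theorem PopAssumptions.memLp_tiltResponse [Finite 𝒮] [MeasurableSingletonClass 𝒮]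
    (hc : c.PopAssumptions) (a : Bool) : MemLp (c.tiltResponse a) 2 c.P :=
  have := hc.prob
  (memLp_tilt hc.mS (hc.memLp_Ya a)).sub ((memLp_tilt hc.mS (hc.memLp_Da a)).const_mul _)

section Linear

variable {ι : Type*} [Fintype ι] {Φ : 𝒮 → (Fin d → ℝ) → ι → ℝ}

def linAdj (c : CARPop Ω 𝒮 d) (Φ : 𝒮 → (Fin d → ℝ) → ι → ℝ) (t b : Bool → 𝒮 → ι → ℝ)
    (a : Bool) : Ω → ℝ :=
  fun ω => c.linPred Φ (t a) ω - c.tau * c.linPred Φ (b a) ω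

variable [Fintype 𝒮] [MeasurableSingletonClass 𝒮] (hc : c.PopAssumptions) (hΦ : c.PsiRegular Φ)
include hc hΦ

theorem PsiRegular.memLp_linAdj (t b : Bool → 𝒮 → ι → ℝ) (a : Bool) :
    MemLp (c.linAdj Φ t b a) 2 c.P :=
  have := hc.prob
  (hΦ.memLp_linPred hc.mS hc.mX (t a)).sub ((hΦ.memLp_linPred hc.mS hc.mX (b a)).const_mul _)

theorem sigma1Sq_add_sigma0Sq_linWM (t b : Bool → 𝒮 → ι → ℝ) :
    c.sigma1Sq (linWM Φ t) (linWM Φ b) + c.sigma0Sq (linWM Φ t) (linWM Φ b)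
      = ∫ ω, xiSq (c.piS (c.S ω)) (c.linAdj Φ t b true ω) (c.linAdj Φ t b false ω)
          (c.tiltResponse true ω) (c.tiltResponse false ω) ∂c.P := by
  have := hc.prob
  simp only [sigma1Sq, sigma0Sq, Xi1_eq_xiOne, Xi0_eq_xiZero,
    tilt_wm_linWM hc.mS (hΦ.integrableOn_coord hc.mX)]
  exact (integral_xiSq hc.mS _ (hΦ.memLp_linAdj hc t b true) (hΦ.memLp_linAdj hc t b false)
    (hc.memLp_tiltResponse true) (hc.memLp_tiltResponse false)).symm

theorem integral_tiltResponse_sub_linAdj_mul_linPred [DecidableEq ι] (a : Bool)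
    (δ : 𝒮 → ι → ℝ) :
    ∫ ω, (c.tiltResponse a ω - c.linAdj Φ (c.thetaL Φ) (c.betaL Φ) a ω) * c.linPred Φ δ ω ∂c.P
      = 0 := by
  have := hc.prob
  have hint {f : Ω → ℝ} (hf : MemLp f 2 c.P) (θ : 𝒮 → ι → ℝ) :
      Integrable (fun ω => (c.tilt f ω - c.linPred Φ θ ω) * c.linPred Φ δ ω) c.P :=
    ((memLp_tilt hc.mS hf).sub (hΦ.memLp_linPred hc.mS hc.mX θ)).integrable_fun_mul
      (hΦ.memLp_linPred hc.mS hc.mX δ)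
  calc _ = ∫ ω, (c.tilt (c.Ya a) ω - c.linPred Φ (c.thetaL Φ a) ω) * c.linPred Φ δ ω ∂c.P
        - c.tau * ∫ ω, (c.tilt (c.Da a) ω - c.linPred Φ (c.betaL Φ a) ω)
            * c.linPred Φ δ ω ∂c.P := by
        rw [← integral_const_mul, ← integral_sub (hint (hc.memLp_Ya a) _)
          ((hint (hc.memLp_Da a) _).const_mul c.tau)]
        congr 1 with ω
        simp only [tiltResponse, linAdj]
        ring
    _ = 0 := by
        rw [integral_residual_mul_linPred hΦ hc.mS hc.mX (hc.memLp_Ya a)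
            (gram_mulVec_thetaL hΦ a),
          integral_residual_mul_linPred hΦ hc.mS hc.mX (hc.memLp_Da a) (gram_mulVec_betaL hΦ a),
          mul_zero, sub_zero]

theorem sigmaSqLin_thetaL_betaL_le [DecidableEq ι] (t b : Bool → 𝒮 → ι → ℝ) :
    c.sigmaSqLin Φ (c.thetaL Φ) (c.betaL Φ) ≤ c.sigmaSqLin Φ t b := by
  have hπ : ∀ s, 0 < c.piS s ∧ c.piS s < 1 := by
    obtain ⟨κ, hκ, hκ', hπ⟩ := hc.piRange
    exact fun s => ⟨hκ.trans (hπ s).1, (hπ s).2.trans (by linarith)⟩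
  simp only [sigmaSqLin, sigmaSq]
  rw [sigma1Sq_add_sigma0Sq_linWM hc hΦ, sigma1Sq_add_sigma0Sq_linWM hc hΦ]
  gcongr (?_ + _) / _
  refine integral_xiSq_le_of_orthogonal hc.mS hπ (hΦ.memLp_linAdj hc _ _)
    (hΦ.memLp_linAdj hc t b) hc.memLp_tiltResponse fun a g₁ g₀ => ?_
  rw [← integral_tiltResponse_sub_linAdj_mul_linPred hc hΦ a fun s =>
    g₁ s • (t true s - c.thetaL Φ true s - c.tau • (b true s - c.betaL Φ true s))
      + g₀ s • (t false s - c.thetaL Φ false s - c.tau • (b false s - c.betaL Φ false s))]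
  congr 1 with ω
  simp only [linAdj, linPred, dotProduct_add, dotProduct_sub, dotProduct_smul, smul_eq_mul]
  ring

end Linear

end Variance

end CARPop

open CARPop in
theorem stmt5_general {Ω : Type*} [MeasurableSpace Ω] {𝒮 : Type*} [Fintype 𝒮] [MeasurableSpace 𝒮]
    [MeasurableSingletonClass 𝒮] {d k : ℕ}
    (c : CARPop Ω 𝒮 d) (hc : PopAssumptions c)
    (Ψ : 𝒮 → (Fin d → ℝ) → Fin k → ℝ)
    (βMLE : Bool → 𝒮 → Fin (k + 1) → ℝ)
    -- the augmented regressor `Φ` satisfies the linear-adjustment regularity conditions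
    (hΦ : c.PsiRegular (Phi Ψ βMLE)) :
    c.sigmaSqLin (Phi Ψ βMLE) (c.thetaL (Phi Ψ βMLE)) (c.betaL (Phi Ψ βMLE))
        ≤ c.sigmaSqLin Ψ (c.thetaL Ψ) (c.betaL Ψ) ∧
    c.sigmaSqLin (Phi Ψ βMLE) (c.thetaL (Phi Ψ βMLE)) (c.betaL (Phi Ψ βMLE))
        ≤ c.sigmaSq (fun a s x => ∑ j, ringPsi Ψ s x j * c.thetaOLS Ψ a s j)
            (fun a s x => logistic (∑ j, ringPsi Ψ s x j * βMLE a s j)) ∧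
    c.sigmaSqLin (Phi Ψ βMLE) (c.thetaL (Phi Ψ βMLE)) (c.betaL (Phi Ψ βMLE))
        ≤ c.sigmaSqLin Ψ 0 0 := by
  have := hc.prob
  have hΨ (s : 𝒮) (j : Fin k) : IntegrableOn (fun ω => Ψ s (c.X ω) j) (c.stratum s) c.P :=
    hΦ.integrableOn_coord hc.mX s (.inl j)
  have hopt := sigmaSqLin_thetaL_betaL_le hc hΦ
  refine ⟨(hopt (fun a s => Sum.elim (c.thetaL Ψ a s) 0)
      fun a s => Sum.elim (c.betaL Ψ a s) 0).trans_eq ?_,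
    (hopt (fun a s => Sum.elim (Fin.tail (c.thetaOLS Ψ a s)) 0)
      fun a _ => Pi.single (.inr a) 1).trans_eq (sigmaSq_congr_tilt (fun a => ?_) fun a => ?_),
    (hopt (fun _ _ => Sum.elim 0 0) fun _ _ => Sum.elim 0 0).trans_eq ?_⟩
  · simp only [sigmaSqLin, linWM_Phi_inl]
  · rw [linWM_Phi_inl]
    exact (tilt_wm_linWM_ringPsi hc.mS (fun s => (hc.strataPos s).ne') hΨ _ a).symm
  · rw [linWM_Phi_inr]
  · simp only [sigmaSqLin, linWM_Phi_inl]
    rfl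

open CARPop in
/-- The further-improved adjustment (optimal linear adjustment based on
the augmented regressor `Φ`, i.e. `(θᶠ, βᶠ)`) is weakly more efficient than the optimal
linear adjustment, than the nonlinear (logistic) adjustment, and than no adjustment:
`σ²_{lin,Φ}(θᶠ,βᶠ) ≤ min{σ²_lin(θᴸ,βᴸ), σ²_NL, σ²_lin(0,0)}`. -/
theorem stmt5 {Ω : Type*} [MeasurableSpace Ω] {𝒮 : Type*} [Fintype 𝒮] [MeasurableSpace 𝒮]
    [MeasurableSingletonClass 𝒮] {d k : ℕ}
    (c : CARPop Ω 𝒮 d) (hc : PopAssumptions c)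
    (Ψ : 𝒮 → (Fin d → ℝ) → Fin k → ℝ) (hΨ : c.PsiRegular Ψ)
    -- moment bound and invertibility for the intercept-augmented regressor `Ψ̊`
    (hRingMom : ∃ q C : ℝ, 2 < q ∧ ∀ s : 𝒮,
      c.cEs s (fun ω => (∑ j, (ringPsi Ψ (c.S ω) (c.X ω) j) ^ 2) ^ (q / 2)) ≤ C)
    (hGram0 : ∀ s, IsUnit (c.gram0 Ψ s).det)
    -- `βMLE a s` is the unique maximizer of the population logistic log-likelihood
    (βMLE : Bool → 𝒮 → Fin (k + 1) → ℝ)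
    (hMLE : ∀ (a : Bool) (s : 𝒮),
      (∀ b, c.logLik Ψ a s b ≤ c.logLik Ψ a s (βMLE a s)) ∧
      (∀ b, c.logLik Ψ a s b = c.logLik Ψ a s (βMLE a s) → b = βMLE a s))
    -- the augmented regressor `Φ` satisfies the linear-adjustment regularity conditions
    (hΦ : c.PsiRegular (Phi Ψ βMLE)) :
    c.sigmaSqLin (Phi Ψ βMLE) (c.thetaL (Phi Ψ βMLE)) (c.betaL (Phi Ψ βMLE))
        ≤ c.sigmaSqLin Ψ (c.thetaL Ψ) (c.betaL Ψ) ∧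
    c.sigmaSqLin (Phi Ψ βMLE) (c.thetaL (Phi Ψ βMLE)) (c.betaL (Phi Ψ βMLE))
        ≤ c.sigmaSq (fun a s x => ∑ j, ringPsi Ψ s x j * c.thetaOLS Ψ a s j)
            (fun a s x => logistic (∑ j, ringPsi Ψ s x j * βMLE a s j)) ∧
    c.sigmaSqLin (Phi Ψ βMLE) (c.thetaL (Phi Ψ βMLE)) (c.betaL (Phi Ψ βMLE))
        ≤ c.sigmaSqLin Ψ 0 0 :=
  stmt5_general c hc Ψ βMLE hΦ
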